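/- arXiv:2210.06378 — 4 statements merged into one kernel-verified Lean document; each statement's English description precedes it below -/
import Mathlib

section
/- Let S be a set of n ≥ 2 generators, d ∈ (0,1), and let 𝓛 be a language of reduced words over S with growth rate at least k, where k > (2n−1)^{1−d}. Then the probability that a random set of relators at density d and length L contains at least one element of 𝓛 tends to 1 as L → ∞. -/
/-!
A uniformly random reduced word of length `l` lies in `𝓛` with probability
`p_l = |𝓛 ∩ R_l| / |R_l|`, so the `m_l = ⌊(2n-1)^(dl)⌋` independent relators all miss `𝓛` with
probability `(1 - p_l)^m_l ≤ exp (-m_l p_l)`. Since `|R_l| ≤ 2n (2n-1)^l` (each letter has at most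
`2n - 1` admissible successors), the expected number `m_l p_l` of relators in `𝓛` is at least a
constant times `(k (2n-1)^d / (2n-1))^l`, which tends to infinity because `k > (2n-1)^(1-d)`.
-/

open Filter Topology

/-- The symmetrized alphabet `S ∪ S⁻¹` for a set `S` of `n` generators. -/
abbrev Letter (n : ℕ) := Fin n × Bool

/-- The formal inverse of a letter. -/
def linv {n : ℕ} (a : Letter n) : Letter n := (a.1, !a.2)

/-- A word is reduced if no two consecutive letters are inverse to each other. -/
def Reduced {n : ℕ} (w : List (Letter n)) : Prop :=
  w.Chain' fun a b => b ≠ linv a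

/-- The set of all reduced words of length `L` over `n` generators. -/
def RW (n L : ℕ) : Set (List (Letter n)) :=
  {w | w.length = L ∧ Reduced w}

/-- The number `⌊(2n-1)^(dL)⌋` of relators in a random set of relators at density `d`
and length `L`. -/
noncomputable def numRelators (n : ℕ) (d : ℝ) (L : ℕ) : ℕ :=
  ⌊(2 * (n : ℝ) - 1) ^ (d * (L : ℝ))⌋₊

/-- The probability that a `⌊(2n-1)^(dL)⌋`-tuple of reduced words of length `L`,
chosen independently and uniformly at random, contains at least one element of `𝓛`:
the number of tuples meeting `𝓛` divided by the total number of tuples. -/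
noncomputable def hitProb (n : ℕ) (d : ℝ) (L : Set (List (Letter n))) (l : ℕ) : ℝ :=
  (Nat.card {f : Fin (numRelators n d l) → ↥(RW n l) // ∃ i, (f i : List (Letter n)) ∈ L} : ℝ) /
    (Nat.card ↥(RW n l) : ℝ) ^ (numRelators n d l)

section Chains

variable {α : Type*} (R : α → α → Prop)

instance finite_subtype_length_eq_and [Finite α] (l : ℕ) (P : List α → Prop) :
    Finite {w : List α // w.length = l ∧ P w} :=
  Finite.of_injective (β := List.Vector α l) (fun w => ⟨w.1, w.2.1⟩)
    fun _ _ h => Subtype.ext (congrArg (fun u : List.Vector α l => u.toList) h)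

variable [Finite α]

theorem card_isChain_cons_le {k : ℕ} (hR : ∀ a, Nat.card {b // R a b} ≤ k) (a : α) (l : ℕ) :
    Nat.card {w : List α // w.length = l ∧ (a :: w).IsChain R} ≤ k ^ l := by
  induction l generalizing a with
  | zero =>
    refine Finite.card_le_one_iff_subsingleton.2 ⟨fun v w => Subtype.ext ?_⟩
    rw [List.length_eq_zero_iff.1 v.2.1, List.length_eq_zero_iff.1 w.2.1]
  | succ l ih =>
    classical
    have := Fintype.ofFinite α
    let cons : (Σ b : {b // R a b}, {w : List α // w.length = l ∧ (b.1 :: w).IsChain R}) →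
        {w : List α // w.length = l + 1 ∧ (a :: w).IsChain R} :=
      fun ⟨b, w⟩ => ⟨b.1 :: w.1, by simp [w.2.1], List.IsChain.cons_cons b.2 w.2.2⟩
    have hcons : Function.Surjective cons := by
      rintro ⟨_ | ⟨b, w⟩, hlen, hchain⟩
      · simp at hlen
      · rw [List.isChain_cons_cons] at hchain
        exact ⟨⟨⟨b, hchain.1⟩, ⟨w, by simpa using hlen, hchain.2⟩⟩, rfl⟩
    calc _ ≤ _ := Nat.card_le_card_of_surjective cons hcons
      _ = ∑ b : {b // R a b}, Nat.card {w : List α // w.length = l ∧ (b.1 :: w).IsChain R} :=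
          Nat.card_sigma
      _ ≤ ∑ _b : {b // R a b}, k ^ l := Finset.sum_le_sum fun b _ => ih b
      _ = Nat.card {b // R a b} * k ^ l := by simp [Nat.card_eq_fintype_card]
      _ ≤ k ^ (l + 1) := by rw [pow_succ']; exact Nat.mul_le_mul_right _ (hR a)

theorem card_isChain_length_succ_le {k : ℕ} (hR : ∀ a, Nat.card {b // R a b} ≤ k) (l : ℕ) :
    Nat.card {w : List α // w.length = l + 1 ∧ w.IsChain R} ≤ Nat.card α * k ^ l := by
  classical
  have := Fintype.ofFinite α
  let cons : (Σ a : α, {w : List α // w.length = l ∧ (a :: w).IsChain R}) →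
      {w : List α // w.length = l + 1 ∧ w.IsChain R} :=
    fun ⟨a, w⟩ => ⟨a :: w.1, by simp [w.2.1], w.2.2⟩
  have hcons : Function.Surjective cons := by
    rintro ⟨_ | ⟨a, w⟩, hlen, hchain⟩
    · simp at hlen
    · exact ⟨⟨a, ⟨w, by simpa using hlen, hchain⟩⟩, rfl⟩
  calc _ ≤ _ := Nat.card_le_card_of_surjective cons hcons
    _ = ∑ a : α, Nat.card {w : List α // w.length = l ∧ (a :: w).IsChain R} := Nat.card_sigma
    _ ≤ ∑ _a : α, k ^ l := Finset.sum_le_sum fun a _ => card_isChain_cons_le R hR a l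
    _ = Nat.card α * k ^ l := by simp [Nat.card_eq_fintype_card]

end Chains

section Sampling

variable {ι β : Type*} [Fintype ι] [Finite β] (p : β → Prop)

theorem card_exists_apply_add_card_pow :
    Nat.card {f : ι → β // ∃ i, p (f i)} + Nat.card {b // ¬ p b} ^ Fintype.card ι
      = Nat.card β ^ Fintype.card ι := by
  classical
  have hmiss : Nat.card {f : ι → β // ¬ ∃ i, p (f i)} = Nat.card {b // ¬ p b} ^ Fintype.card ι := by
    rw [Nat.card_congr ((Equiv.subtypeEquivRight fun _ => not_exists).trans
      (Equiv.subtypePiEquivPi (β := fun _ => β) (p := fun _ b => ¬ p b))),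
      Nat.card_pi, Finset.prod_const, Finset.card_univ]
  rw [← hmiss, ← Nat.card_sum, Nat.card_congr (Equiv.sumCompl _), Nat.card_fun,
    Nat.card_eq_fintype_card (α := ι)]

theorem card_exists_apply_div_card_pow (hβ : Nat.card β ≠ 0) :
    (Nat.card {f : ι → β // ∃ i, p (f i)} : ℝ) / (Nat.card β : ℝ) ^ Fintype.card ι
      = 1 - (1 - (Nat.card {b // p b} : ℝ) / Nat.card β) ^ Fintype.card ι := by
  have hsplit : (Nat.card {b // p b} : ℝ) + Nat.card {b // ¬ p b} = Nat.card β := by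
    classical
    exact_mod_cast (Nat.card_sum.symm.trans (Nat.card_congr (Equiv.sumCompl p)))
  have hcount : (Nat.card {f : ι → β // ∃ i, p (f i)} : ℝ) + Nat.card {b // ¬ p b} ^ Fintype.card ι
      = Nat.card β ^ Fintype.card ι := by
    exact_mod_cast card_exists_apply_add_card_pow p
  have hβ' : (Nat.card β : ℝ) ≠ 0 := by exact_mod_cast hβ
  have hcompl :
      1 - (Nat.card {b // p b} : ℝ) / Nat.card β = Nat.card {b // ¬ p b} / Nat.card β := by
    rw [eq_div_iff hβ', sub_mul, div_mul_cancel₀ _ hβ']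
    linarith
  rw [hcompl, div_pow, eq_sub_iff_add_eq, ← add_div, hcount, div_self (pow_ne_zero _ hβ')]

end Sampling

theorem tendsto_one_sub_one_sub_pow_nhds_one {ι : Type*} {F : Filter ι} {p : ι → ℝ} {m : ι → ℕ}
    (hp : ∀ᶠ i in F, p i ≤ 1) (hmp : Tendsto (fun i => m i * p i) F atTop) :
    Tendsto (fun i => 1 - (1 - p i) ^ m i) F (𝓝 1) := by
  have hexp : Tendsto (fun i => Real.exp (-(m i * p i))) F (𝓝 0) :=
    Real.tendsto_exp_neg_atTop_nhds_zero.comp hmp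
  have hpow : Tendsto (fun i => (1 - p i) ^ m i) F (𝓝 0) := by
    refine tendsto_of_tendsto_of_tendsto_of_le_of_le' tendsto_const_nhds hexp ?_ ?_
    · filter_upwards [hp] with i hi using pow_nonneg (sub_nonneg.2 hi) _
    · filter_upwards [hp] with i hi
      calc (1 - p i) ^ m i ≤ Real.exp (-p i) ^ m i :=
            pow_le_pow_left₀ (sub_nonneg.2 hi) (Real.one_sub_le_exp_neg _) _
        _ = Real.exp (-(m i * p i)) := by rw [← Real.exp_nat_mul]; ring_nf
  simpa using hpow.const_sub 1

instance (n l : ℕ) : Finite (RW n l) :=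
  finite_subtype_length_eq_and l Reduced

theorem card_RW_le {n : ℕ} (hn : 1 ≤ n) (l : ℕ) : Nat.card (RW n l) ≤ 2 * n * (2 * n - 1) ^ l := by
  cases l with
  | zero =>
    have : Nat.card (RW n 0) ≤ 1 := Finite.card_le_one_iff_subsingleton.2
      ⟨fun v w => Subtype.ext <| by
        rw [List.length_eq_zero_iff.1 v.2.1, List.length_eq_zero_iff.1 w.2.1]⟩
    simpa using this.trans (by omega)
  | succ l =>
    have hsucc : ∀ a : Letter n, Nat.card {b // b ≠ linv a} ≤ 2 * n - 1 := fun a => by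
      simp [Nat.card_eq_fintype_card, Fintype.card_subtype_compl, mul_comm]
    calc Nat.card (RW n (l + 1)) ≤ Nat.card (Letter n) * (2 * n - 1) ^ l :=
          card_isChain_length_succ_le (fun a b => b ≠ linv a) hsucc l
      _ ≤ 2 * n * (2 * n - 1) ^ (l + 1) := by
          rw [show Nat.card (Letter n) = 2 * n by simp [mul_comm]]
          exact Nat.mul_le_mul_left _ (Nat.pow_le_pow_right (by omega) l.le_succ)

theorem card_RW_pos {n : ℕ} (hn : 1 ≤ n) (l : ℕ) : 0 < Nat.card (RW n l) :=
  have : Nonempty (RW n l) := ⟨⟨List.replicate l (⟨0, hn⟩, true), List.length_replicate,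
    List.isChain_replicate_of_rel _ (by simp [linv])⟩⟩
  Nat.card_pos

theorem hitProb_eq {n : ℕ} (hn : 1 ≤ n) (d : ℝ) (L : Set (List (Letter n))) (l : ℕ) :
    hitProb n d L l
      = 1 - (1 - (Nat.card ↥(L ∩ RW n l) : ℝ) / Nat.card (RW n l)) ^ numRelators n d l := by
  have hsample := card_exists_apply_div_card_pow (ι := Fin (numRelators n d l))
    (fun w : RW n l => (w : List (Letter n)) ∈ L) (card_RW_pos hn l).ne'
  rw [Fintype.card_fin] at hsample
  rw [hitProb, hsample, Nat.card_congr
    ((Equiv.subtypeSubtypeEquivSubtypeInter (· ∈ RW n l) (· ∈ L)).trans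
      (Equiv.subtypeEquivRight fun _ => and_comm))]
  rfl

theorem pow_div_two_le_numRelators {n : ℕ} (hn : 1 ≤ n) {d : ℝ} (hd : 0 ≤ d) (l : ℕ) :
    ((2 * n - 1 : ℝ) ^ d) ^ l / 2 ≤ numRelators n d l := by
  have hb : (1 : ℝ) ≤ 2 * n - 1 := by
    have : (1 : ℝ) ≤ n := by exact_mod_cast hn
    linarith
  rw [numRelators, ← Real.rpow_natCast, ← Real.rpow_mul (by linarith)]
  exact (Nat.div_two_lt_floor (Real.one_le_rpow hb (by positivity))).le

-- The right-hand side is the expected number of relators lying in `L`.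
theorem pow_le_numRelators_mul_density {n : ℕ} (hn : 1 ≤ n) {d : ℝ} (hd : 0 ≤ d)
    {L : Set (List (Letter n))} {c k : ℝ} (hc : 0 < c) (hk : 0 < k) {l : ℕ}
    (hl : c * k ^ l ≤ Nat.card ↥(L ∩ RW n l)) :
    c / (4 * n) * (k * (2 * n - 1 : ℝ) ^ d / (2 * n - 1)) ^ l
      ≤ numRelators n d l * ((Nat.card ↥(L ∩ RW n l) : ℝ) / Nat.card (RW n l)) := by
  have hb : (1 : ℝ) ≤ 2 * n - 1 := by
    have : (1 : ℝ) ≤ n := by exact_mod_cast hn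
    linarith
  have hN : (0 : ℝ) < Nat.card (RW n l) := by exact_mod_cast card_RW_pos hn l
  have hNle : (Nat.card (RW n l) : ℝ) ≤ 2 * n * (2 * n - 1) ^ l := by
    have := card_RW_le hn l
    rw [← Nat.cast_le (α := ℝ)] at this
    push_cast [Nat.cast_sub (by omega : 1 ≤ 2 * n)] at this
    exact this
  calc c / (4 * n) * (k * (2 * n - 1 : ℝ) ^ d / (2 * n - 1)) ^ l
        = ((2 * n - 1 : ℝ) ^ d) ^ l / 2 * (c * k ^ l / (2 * n * (2 * n - 1) ^ l)) := by
        rw [div_pow, mul_pow]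
        field_simp
        ring
    _ ≤ _ := mul_le_mul (pow_div_two_le_numRelators hn hd l)
        (div_le_div₀ (by positivity) hl hN hNle) (by positivity) (by positivity)

theorem one_lt_mul_rpow_div {b d k : ℝ} (hb : 0 < b) (hk : b ^ (1 - d) < k) :
    1 < k * b ^ d / b := by
  rw [Real.rpow_sub hb, Real.rpow_one, div_lt_iff₀ (Real.rpow_pos_of_pos hb _)] at hk
  rwa [one_lt_div hb]

theorem random_relators_meet_large_language_general (n : ℕ) (hn : 2 ≤ n)
    (d : ℝ) (hd : d ∈ Set.Ioo (0 : ℝ) 1)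
    (L : Set (List (Letter n)))
    (k : ℝ) (hk : (2 * (n : ℝ) - 1) ^ ((1 : ℝ) - d) < k)
    (c : ℝ) (hc : 0 < c)
    (hgrowth : ∀ᶠ l : ℕ in atTop,
      c * k ^ l ≤ (Nat.card ↥(L ∩ RW n l) : ℝ)) :
    Tendsto (hitProb n d L) atTop (𝓝 1) := by
  have hn1 : 1 ≤ n := by omega
  have hb : (0 : ℝ) < 2 * n - 1 := by
    have : (2 : ℝ) ≤ n := by exact_mod_cast hn
    linarith
  have hdensity (l : ℕ) : (Nat.card ↥(L ∩ RW n l) : ℝ) / Nat.card (RW n l) ≤ 1 :=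
    div_le_one_of_le₀ (by exact_mod_cast Nat.card_mono (Set.toFinite _) Set.inter_subset_right)
      (Nat.cast_nonneg _)
  have hexpected : Tendsto (fun l => numRelators n d l *
      ((Nat.card ↥(L ∩ RW n l) : ℝ) / Nat.card (RW n l))) atTop atTop :=
    tendsto_atTop_mono' _
      (hgrowth.mono fun l hl => pow_le_numRelators_mul_density hn1 hd.1.le hc
        ((Real.rpow_pos_of_pos hb _).trans hk) hl)
      ((tendsto_pow_atTop_atTop_of_one_lt (one_lt_mul_rpow_div hb hk)).const_mul_atTop
        (by positivity))
  exact (tendsto_one_sub_one_sub_pow_nhds_one (Eventually.of_forall hdensity) hexpected).congr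
    fun l => (hitProb_eq hn1 d L l).symm

/-- If a language `𝓛` of reduced words over `n ≥ 2` generators has growth rate at least
`k > (2n-1)^(1-d)`, then a random set of relators at density `d` and length `l` contains
an element of `𝓛` with probability tending to `1` as `l → ∞`. -/
theorem random_relators_meet_large_language (n : ℕ) (hn : 2 ≤ n)
    (d : ℝ) (hd : d ∈ Set.Ioo (0 : ℝ) 1)
    (L : Set (List (Letter n))) (hred : ∀ w ∈ L, Reduced w)
    (k : ℝ) (hk : (2 * (n : ℝ) - 1) ^ ((1 : ℝ) - d) < k)
    (c : ℝ) (hc : 0 < c)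
    (hgrowth : ∀ᶠ l : ℕ in atTop,
      c * k ^ l ≤ (Nat.card ↥(L ∩ RW n l) : ℝ)) :
    Tendsto (hitProb n d L) atTop (𝓝 1) :=
  random_relators_meet_large_language_general n hn d hd L k hk c hc hgrowth
end

section
/- Let F_n be the free group on n ≥ 1 generators and B ≥ 1 an integer. The subgroup of F_n generated by the set of all elements of reduced word length exactly B has finite index in F_n. -/
/-!
Splitting a reduced word of length at least `B` before its last `B` letters writes the element as
`y * z` with `z` of length exactly `B` and `y` strictly shorter, and `y` lies in the same left coset
of the subgroup `H` generated by the words of length `B`. Hence every coset of `H` contains an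
element of length less than `B`; there are finitely many of those, so `H` has finite index.
-/

namespace FreeGroup

variable {α : Type*} [DecidableEq α]

theorem toWord_mk_of_isReduced {L : List (α × Bool)} (h : IsReduced L) : (mk L).toWord = L := by
  rw [toWord_mk, h.reduce_eq]

theorem exists_eq_mul_toWord_length_eq (x : FreeGroup α) {k : ℕ} (hk : k ≤ x.toWord.length) :
    ∃ y z : FreeGroup α,
      x = y * z ∧ y.toWord.length = x.toWord.length - k ∧ z.toWord.length = k := by
  set L := x.toWord
  set i := L.length - k
  refine ⟨mk (L.take i), mk (L.drop i), ?_, ?_, ?_⟩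
  · rw [mul_mk, List.take_append_drop, mk_toWord]
  · rw [toWord_mk_of_isReduced (isReduced_toWord.infix (List.take_prefix i L).isInfix),
      List.length_take]
    omega
  · rw [toWord_mk_of_isReduced (isReduced_toWord.infix (List.drop_suffix i L).isInfix),
      List.length_drop]
    omega

theorem exists_toWord_length_lt_mk_eq {B : ℕ} (hB : 0 < B) (x : FreeGroup α) :
    ∃ y : FreeGroup α, y.toWord.length < B ∧
      (y : FreeGroup α ⧸ Subgroup.closure {z : FreeGroup α | z.toWord.length = B}) = x := by
  induction hx : x.toWord.length using Nat.strong_induction_on generalizing x with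
  | _ m ih =>
    by_cases hm : m < B
    · exact ⟨x, hx ▸ hm, rfl⟩
    obtain ⟨y, z, rfl, hy, hz⟩ := exists_eq_mul_toWord_length_eq x (k := B) (by omega)
    obtain ⟨v, hv, hvy⟩ := ih _ (by omega) y rfl
    refine ⟨v, hv, hvy.trans ?_⟩
    rw [QuotientGroup.eq, inv_mul_cancel_left]
    exact Subgroup.subset_closure hz

theorem finite_setOf_toWord_length_lt [Finite α] (B : ℕ) :
    {x : FreeGroup α | x.toWord.length < B}.Finite :=
  (List.finite_length_lt (α × Bool) B).preimage toWord_injective.injOn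

end FreeGroup

open FreeGroup in
theorem length_B_words_generate_finite_index_general (n B : ℕ) (hB : 1 ≤ B) :
    (Subgroup.closure {x : FreeGroup (Fin n) | x.toWord.length = B}).FiniteIndex := by
  set H := Subgroup.closure {x : FreeGroup (Fin n) | x.toWord.length = B}
  have hsurj : Set.SurjOn (QuotientGroup.mk : FreeGroup (Fin n) → FreeGroup (Fin n) ⧸ H)
      {x : FreeGroup (Fin n) | x.toWord.length < B} Set.univ := by
    rintro q -
    obtain ⟨x, rfl⟩ := QuotientGroup.mk_surjective q
    exact exists_toWord_length_lt_mk_eq hB x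
  have := Set.finite_univ_iff.mp ((finite_setOf_toWord_length_lt B).of_surjOn _ hsurj)
  exact Subgroup.finiteIndex_of_finite_quotient

/-- For the free group `F_n` on `n ≥ 1` generators and `B ≥ 1`, the subgroup generated
by all elements of reduced word length exactly `B` has finite index in `F_n`. -/
theorem length_B_words_generate_finite_index (n B : ℕ) (hn : 1 ≤ n) (hB : 1 ≤ B) :
    (Subgroup.closure {x : FreeGroup (Fin n) | x.toWord.length = B}).FiniteIndex :=
  length_B_words_generate_finite_index_general n B hB
end

section
/- Let S be a set of n ≥ 1 generators, B ≥ 1, and let Ŝ-words be words over the alphabet = R_B of all reduced words of length B over S (an alphabet of size 2n̂ = 2n(2n−1)^{B−1}, closed under the involution given by inversion in the free group F_S). Let Σ̂ be an Â-automaton with k-growth, where k ≥ (2n−1)^{B−1}. Then there exists an Â-automaton Σ^red with (k − (2n−1)^{B−1})-growth such that every word accepted by Σ^red is also accepted by Σ̂, and such that for every word q₁q₂⋯q_m accepted by Σ^red, the product q₁q₂⋯q_m in the free group F_S is a reduced word over S of length B·m (i.e., no cancellation occurs between consecutive letters q_i, q_{i+1}). -/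
/-- Inversion of words (inversion in the free group `F_S`), the involution on the
alphabet `Â = R_B`. -/
def wInv {n : ℕ} (w : List (Letter n)) : List (Letter n) :=
  (w.map linv).reverse

/-- Running an automaton with partial transition function `δ` from a state, reading a word. -/
def run {A Q : Type} (δ : Q → A → Option Q) : Q → List A → Option Q
  | q, [] => some q
  | q, a :: w => (δ q a).bind fun q' => run δ q' w

section Aux
variable {n : ℕ}

lemma card_ne (x : Letter n) : Fintype.card {a : Letter n // a ≠ x} = 2 * n - 1 := by
  have : Fintype.card {a : Letter n // ¬ (a = x)} =
      Fintype.card (Letter n) - Fintype.card {a : Letter n // a = x} :=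
    Fintype.card_subtype_compl _
  simp only [Fintype.card_subtype_eq] at this
  simpa [Fintype.card_prod, mul_comm] using this

noncomputable def stepEquiv (x : Letter n) : {a : Letter n // a ≠ x} ≃ Fin (2 * n - 1) :=
  Fintype.equivFinOfCardEq (card_ne x)

noncomputable def g (hn : 1 ≤ n) (p a : Letter n) : Fin (2 * n - 1) :=
  if h : a ≠ linv p then stepEquiv (linv p) ⟨a, h⟩ else ⟨0, by omega⟩

lemma zip_inj (hn : 1 ≤ n) : ∀ (w₁ w₂ : List (Letter n)), Reduced w₁ → Reduced w₂ →
    w₁.head? = w₂.head? → w₁.length = w₂.length →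
    List.zipWith (g hn) w₁ w₁.tail = List.zipWith (g hn) w₂ w₂.tail → w₁ = w₂ := by
  intro w₁
  induction w₁ with
  | nil => intro w₂ _ _ _ hlen _; cases w₂ <;> simp_all
  | cons a t ih =>
    intro w₂ hr1 hr2 hhead hlen hzip
    cases w₂ with
    | nil => simp at hlen
    | cons b t₂ =>
      simp only [List.head?_cons, Option.some.injEq] at hhead
      subst hhead
      cases t with
      | nil => cases t₂ <;> simp_all
      | cons c t' =>
        cases t₂ with
        | nil => simp at hlen
        | cons d t₂' =>
          simp only [List.tail_cons, List.zipWith_cons_cons, List.cons.injEq] at hzip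
          have hc : c ≠ linv a := (List.isChain_cons_cons.mp hr1).1
          have hd : d ≠ linv a := (List.isChain_cons_cons.mp hr2).1
          have hcd : c = d := by
            have := hzip.1
            rw [g, g, dif_pos hc, dif_pos hd] at this
            have := (stepEquiv (linv a)).injective this
            exact congrArg Subtype.val this
          subst hcd
          have : c :: t' = c :: t₂' := by
            refine ih (c :: t₂') hr1.tail hr2.tail rfl (by simpa using hlen) ?_
            simpa using hzip.2
          rw [this]

lemma count_head (hn : 1 ≤ n) (B : ℕ) (hB : 1 ≤ B) (c : Letter n) :
    Nat.card {w : List (Letter n) // (w.length = B ∧ Reduced w) ∧ w.head? = some c} ≤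
      (2 * n - 1) ^ (B - 1) := by
  have hlenF : ∀ w : {w : List (Letter n) // (w.length = B ∧ Reduced w) ∧ w.head? = some c},
      (List.zipWith (g hn) w.1 w.1.tail).length = B - 1 := by
    rintro ⟨w, hw⟩
    simp [List.length_zipWith, hw.1.1, List.length_tail]
  have hinj : Function.Injective (fun w :
      {w : List (Letter n) // (w.length = B ∧ Reduced w) ∧ w.head? = some c} =>
      (⟨List.zipWith (g hn) w.1 w.1.tail, hlenF w⟩ :
        List.Vector (Fin (2 * n - 1)) (B - 1))) := by
    rintro ⟨w₁, hw₁⟩ ⟨w₂, hw₂⟩ h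
    have : List.zipWith (g hn) w₁ w₁.tail = List.zipWith (g hn) w₂ w₂.tail := by
      simpa [List.Vector] using congrArg Subtype.val h
    exact Subtype.ext (zip_inj hn w₁ w₂ hw₁.1.2 hw₂.1.2 (hw₁.2.trans hw₂.2.symm)
      (hw₁.1.1.trans hw₂.1.1.symm) this)
  calc Nat.card _ ≤ Nat.card (List.Vector (Fin (2 * n - 1)) (B - 1)) :=
        Nat.card_le_card_of_injective _ hinj
    _ = (2 * n - 1) ^ (B - 1) := by
        rw [Nat.card_eq_fintype_card, card_vector, Fintype.card_fin]

end Aux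

section Constr
variable {n : ℕ} {Q : Type}

def compatB (o : Option (Letter n)) (w : List (Letter n)) : Bool :=
  match o, w.head? with
  | some p, some a => decide (a ≠ linv p)
  | _, _ => true

def δred (δ : Q → List (Letter n) → Option Q) :
    Q × Option (Letter n) → List (Letter n) → Option (Q × Option (Letter n)) :=
  fun qo w => if compatB qo.2 w then (δ qo.1 w).map (fun v => (v, w.getLast?)) else none

lemma δred_isSome {δ : Q → List (Letter n) → Option Q} {qo : Q × Option (Letter n)}
    {w : List (Letter n)} :
    (δred δ qo w).isSome ↔ (δ qo.1 w).isSome ∧ compatB qo.2 w = true := by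
  unfold δred
  by_cases h : compatB qo.2 w = true <;> simp [h]

lemma δred_eq_some {δ : Q → List (Letter n) → Option Q} {qo r : Q × Option (Letter n)}
    {w : List (Letter n)} (h : δred δ qo w = some r) :
    δ qo.1 w = some r.1 ∧ r.2 = w.getLast? ∧ compatB qo.2 w = true := by
  unfold δred at h
  by_cases hc : compatB qo.2 w = true
  · simp [hc] at h
    obtain ⟨v, hv, hr⟩ := h
    subst hr
    exact ⟨hv, rfl, hc⟩
  · simp [hc] at h

lemma compatB_head {o : Option (Letter n)} {w : List (Letter n)}
    (h : compatB o w = true) {p : Letter n} (hp : o = some p) {a : Letter n}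
    (ha : w.head? = some a) : a ≠ linv p := by
  subst hp
  unfold compatB at h
  rw [ha] at h
  simpa using h

lemma run_proj {δ : Q → List (Letter n) → Option Q} :
    ∀ (w : List (List (Letter n))) (qo : Q × Option (Letter n)),
      (run (δred δ) qo w).isSome → (run δ qo.1 w).isSome := by
  intro w
  induction w with
  | nil => intro qo _; simp [run]
  | cons a w ih =>
    intro qo h
    rw [run] at h ⊢
    cases hda : δred δ qo a with
    | none => rw [hda] at h; simp at h
    | some r =>
      rw [hda] at h
      simp only [Option.bind_some] at h
      rw [(δred_eq_some hda).1]
      simpa using ih r h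

lemma run_inv {B : ℕ} (hB : 1 ≤ B) {δ : Q → List (Letter n) → Option Q}
    (hdom : ∀ q a, (δ q a).isSome → a ∈ RW n B) :
    ∀ (w : List (List (Letter n))) (qo : Q × Option (Letter n)),
      (run (δred δ) qo w).isSome →
      Reduced w.flatten ∧ w.flatten.length = B * w.length ∧
        ∀ p, qo.2 = some p → ∀ a, w.flatten.head? = some a → a ≠ linv p := by
  intro w
  induction w with
  | nil =>
    intro qo _
    refine ⟨List.isChain_nil, by simp, ?_⟩
    intro p _ a ha
    simp at ha
  | cons u w ih =>
    intro qo h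
    rw [run] at h
    cases hda : δred δ qo u with
    | none => rw [hda] at h; simp at h
    | some r =>
      rw [hda] at h
      simp only [Option.bind_some] at h
      obtain ⟨hδ, hr2, hcompat⟩ := δred_eq_some hda
      have hu : u ∈ RW n B := hdom _ _ (by rw [hδ]; rfl)
      obtain ⟨hulen, hured⟩ := hu
      have hune : u ≠ [] := by
        intro h0; rw [h0] at hulen; simp at hulen; omega
      obtain ⟨hwred, hwlen, hwhead⟩ := ih r h
      have hseam : ∀ x ∈ u.getLast?, ∀ y ∈ w.flatten.head?, y ≠ linv x := by
        intro x hx y hy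
        exact hwhead x (by rw [hr2]; simpa using hx) y hy
      refine ⟨?_, ?_, ?_⟩
      · rw [List.flatten_cons]
        exact List.isChain_append.mpr ⟨hured, hwred, hseam⟩
      · rw [List.flatten_cons]
        simp [List.length_append, hulen, hwlen, Nat.mul_succ, Nat.mul_add]
        ring
      · intro p hp a ha
        rw [List.flatten_cons, List.head?_append, List.head?_eq_head hune] at ha
        rw [Option.or_of_isSome (by simp)] at ha
        exact compatB_head hcompat hp ((List.head?_eq_head hune).trans ha)

end Constr

lemma compatB_some_iff {n : ℕ} (p : Letter n) (w : List (Letter n)) :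
    compatB (some p) w = true ↔ w.head? ≠ some (linv p) := by
  cases hw : w.head? with
  | none => simp [compatB, hw]
  | some a => simp [compatB, hw]

/-- Let `Σ̂` be an automaton over the alphabet `Â = R_B` of reduced words of length `B`
(with the immersion condition for the involution given by inversion in `F_S`), with
`k`-growth where `k ≥ (2n-1)^(B-1)`. Then there is an `Â`-automaton `Σ^red` with
`(k - (2n-1)^(B-1))`-growth whose accepted words are accepted by `Σ̂` and concatenate
to reduced words over `S` of length `B·m` (no cancellation between consecutive letters). -/
theorem reduced_automaton_exists (n B : ℕ) (hn : 1 ≤ n) (hB : 1 ≤ B)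
    (Q : Type) [Finite Q] (v0 : Q)
    (δ : Q → List (Letter n) → Option Q)
    (hdom : ∀ q a, (δ q a).isSome → a ∈ RW n B)
    (himm : ∀ u a v, δ u a = some v → δ v (wInv a) = none)
    (k : ℕ) (hkB : (2 * n - 1) ^ (B - 1) ≤ k)
    (hk : ∀ q : Q, k ≤ Nat.card {a : List (Letter n) // (δ q a).isSome}) :
    ∃ (Q' : Type) (_ : Finite Q') (v0' : Q')
      (δ' : Q' → List (Letter n) → Option Q'),
      (∀ q a, (δ' q a).isSome → a ∈ RW n B) ∧
      (∀ u a v, δ' u a = some v → δ' v (wInv a) = none) ∧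
      (∀ q : Q', k - (2 * n - 1) ^ (B - 1) ≤
        Nat.card {a : List (Letter n) // (δ' q a).isSome}) ∧
      (∀ w : List (List (Letter n)), (run δ' v0' w).isSome → (run δ v0 w).isSome) ∧
      (∀ w : List (List (Letter n)), (run δ' v0' w).isSome →
        Reduced w.flatten ∧ w.flatten.length = B * w.length) := by
  refine ⟨Q × Option (Letter n), inferInstance, (v0, none), δred δ, ?_, ?_, ?_, ?_, ?_⟩
  · -- domain
    intro q a h
    exact hdom q.1 a (δred_isSome.mp h).1
  · -- immersion
    intro u a v h
    obtain ⟨hδ, _, _⟩ := δred_eq_some h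
    have := himm u.1 a v.1 hδ
    simp [δred, this]
  · -- growth
    rintro ⟨q, o⟩
    have hcard : ∀ (P : List (Letter n) → Prop),
        Nat.card {a : List (Letter n) // P a} = {a | P a}.ncard := fun P =>
      Nat.card_coe_set_eq _
    rw [hcard]
    have hT : k ≤ {a | (δ q a).isSome}.ncard := by rw [← hcard]; exact hk q
    cases o with
    | none =>
      have hset : {a : List (Letter n) | (δred δ (q, none) a).isSome}
          = {a | (δ q a).isSome} := by
        ext a
        simp only [Set.mem_setOf_eq, δred_isSome]
        simp [compatB]
      rw [hset]
      omega
    | some p =>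
      set Tset : Set (List (Letter n)) := {a | (δ q a).isSome} with hTdef
      set T'set : Set (List (Letter n)) := {a | (δred δ (q, some p) a).isSome} with hT'def
      set Bad : Set (List (Letter n)) := {a | a.head? = some (linv p)} with hBaddef
      have hT'sub : T'set ⊆ Tset := fun a ha => (δred_isSome.mp ha).1
      have hsub : Tset ⊆ T'set ∪ (Tset ∩ Bad) := by
        intro a ha
        by_cases hb : a ∈ Bad
        · exact Or.inr ⟨ha, hb⟩
        · refine Or.inl ?_
          refine δred_isSome.mpr ⟨ha, ?_⟩
          exact (compatB_some_iff p a).mpr hb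
      have hRWfin : ({w : List (Letter n) |
          (w.length = B ∧ Reduced w) ∧ w.head? = some (linv p)}).Finite :=
        (List.finite_length_eq (Letter n) B).subset (fun a ha => ha.1.1)
      have hBadRW : Tset ∩ Bad ⊆ {w : List (Letter n) |
          (w.length = B ∧ Reduced w) ∧ w.head? = some (linv p)} := by
        rintro a ⟨ha, hb⟩
        exact ⟨hdom q a ha, hb⟩
      have h1 : (Tset ∩ Bad).ncard ≤ (2 * n - 1) ^ (B - 1) := by
        refine le_trans (Set.ncard_le_ncard hBadRW hRWfin) ?_
        rw [← hcard]
        exact count_head hn B hB (linv p)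
      by_cases hfin : Tset.Finite
      · have h2 : Tset.ncard ≤ T'set.ncard + (Tset ∩ Bad).ncard := by
          refine le_trans (Set.ncard_le_ncard hsub ((hfin.subset hT'sub).union
            (hfin.inter_of_left Bad))) (Set.ncard_union_le _ _)
        omega
      · rw [Set.Infinite.ncard (fun h => hfin h)] at hT
        omega
  · intro w h
    exact run_proj w (v0, none) h
  · intro w h
    obtain ⟨h1, h2, _⟩ := run_inv hB hdom w (v0, none) h
    exact ⟨h1, h2⟩
end

section
/- Let S be a set of n ≥ 1 generators, B ≥ 1, 1 ≤ P < B, and = R_B the alphabet of all reduced words of length B over S. Let λ satisfy 1/(2n) < λ ≤ 1 and let Σ̂ be an Â-automaton with λ·2n̂-growth, where 2n̂ = 2n(2n−1)^{B−1}. For L of the form L = B·L̂ + P, let 𝒫_P be the set of reduced words over S of length L whose initial subword of length L − P is the concatenation of a word accepted by Σ̂ that is reduced over S. Then, with m = (λ − 1/(2n))^{1/B}·(2n−1), there exists c > 0 such that |𝒫_P| ≥ c·m^L for all but finitely many L of the form B·L̂ + P. -/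
open Filter Topology

/-!
From every state, at least `λ·2n̂` blocks can be read, and a block creates a cancellation with
the letters read so far only if it starts with the inverse of the last one; at most
`(2n-1)^(B-1)` blocks do. So each accepted block sequence with reduced concatenation has at
least `λ·2n̂ - (2n-1)^(B-1) ≥ (λ - 1/(2n))·(2n-1)^B` admissible one-block extensions, giving at
least `((λ - 1/(2n))·(2n-1)^B)^L̂` sequences of `L̂` blocks. Each concatenation continues in
`(2n-1)^P` ways to a reduced word of length `B·L̂ + P`, and all these words are distinct since
the blocks have fixed length `B`.
-/

open Finset

namespace Reduced

variable {n : ℕ}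

instance : DecidablePred (Reduced (n := n)) :=
  fun w => inferInstanceAs (Decidable (w.IsChain _))

theorem cons_iff {a : Letter n} {t : List (Letter n)} :
    Reduced (a :: t) ↔ (∀ b ∈ t.head?, b ≠ linv a) ∧ Reduced t :=
  List.isChain_cons

theorem append_iff {u v : List (Letter n)} :
    Reduced (u ++ v) ↔ Reduced u ∧ Reduced v ∧ ∀ a ∈ u.getLast?, ∀ b ∈ v.head?, b ≠ linv a :=
  List.isChain_append

theorem singleton (a : Letter n) : Reduced [a] :=
  List.isChain_singleton a

theorem append_of_cons_getLastD {u t : List (Letter n)} (d : Letter n) (hu : Reduced u)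
    (ht : Reduced (u.getLastD d :: t)) : Reduced (u ++ t) := by
  rw [cons_iff] at ht
  refine append_iff.2 ⟨hu, ht.2, fun a ha => ?_⟩
  rw [List.getLastD_eq_getLast?, Option.mem_def.1 ha] at ht
  exact ht.1

end Reduced

section Counting

variable {n : ℕ}

def extensions (ℓ : Letter n) : ℕ → Finset (List (Letter n))
  | 0 => {[]}
  | m + 1 => (univ.filter (· ≠ linv ℓ)).biUnion fun a => (extensions a m).image (a :: ·)

theorem mem_extensions {ℓ : Letter n} {m : ℕ} {t : List (Letter n)} :
    t ∈ extensions ℓ m ↔ t.length = m ∧ Reduced (ℓ :: t) := by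
  induction m generalizing ℓ t with
  | zero =>
    simp only [extensions, mem_singleton, List.length_eq_zero_iff, iff_self_and]
    rintro rfl
    exact Reduced.singleton ℓ
  | succ m ih =>
    cases t with
    | nil => simp [extensions]
    | cons a s =>
      simp [extensions, ih, Reduced.cons_iff (t := a :: s), and_left_comm]

theorem card_extensions (ℓ : Letter n) (m : ℕ) : #(extensions ℓ m) = (2 * n - 1) ^ m := by
  induction m generalizing ℓ with
  | zero => simp [extensions]
  | succ m ih =>
    rw [extensions, card_biUnion]
    · simp_rw [card_image_of_injective _ (List.cons_injective), ih, sum_const, smul_eq_mul,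
        filter_ne', card_erase_of_mem (mem_univ _), card_univ, Fintype.card_prod,
        Fintype.card_fin, Fintype.card_bool, pow_succ, mul_comm 2 n]
      ring
    · intro a _ b _ hab
      simp only [Function.onFun, disjoint_left, mem_image]
      rintro _ ⟨s, _, rfl⟩ ⟨s', _, h⟩
      exact hab (List.cons.inj h).1.symm

theorem card_filter_head_eq_le (S : Finset (List (Letter n))) {B : ℕ} (hS : ∀ b ∈ S, b ∈ RW n B)
    (a : Letter n) : #(S.filter (·.head? = some a)) ≤ (2 * n - 1) ^ (B - 1) := by
  calc #(S.filter (·.head? = some a))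
      ≤ #((extensions a (B - 1)).image (a :: ·)) := by
        refine card_le_card fun b hb => ?_
        obtain ⟨hbS, hhead⟩ := mem_filter.1 hb
        obtain ⟨hlen, hred⟩ := hS b hbS
        cases b with
        | nil => simp at hhead
        | cons c t =>
          obtain rfl : c = a := by simpa using hhead
          exact mem_image.2 ⟨t, mem_extensions.2 ⟨by simp at hlen; omega, hred⟩, rfl⟩
    _ ≤ (2 * n - 1) ^ (B - 1) := card_image_le.trans (card_extensions a _).le

theorem card_filter_not_reduced_append_le {u : List (Letter n)} (hu : Reduced u)
    (S : Finset (List (Letter n))) {B : ℕ} (hS : ∀ b ∈ S, b ∈ RW n B) :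
    #(S.filter fun b => ¬Reduced (u ++ b)) ≤ (2 * n - 1) ^ (B - 1) := by
  cases hlast : u.getLast? with
  | none =>
    rw [filter_false_of_mem fun b hb hred =>
      hred (Reduced.append_iff.2 ⟨hu, (hS b hb).2, by simp [hlast]⟩)]
    simp
  | some x =>
    refine (card_le_card fun b hb => ?_).trans (card_filter_head_eq_le S hS (linv x))
    obtain ⟨hbS, hred⟩ := mem_filter.1 hb
    refine mem_filter.2 ⟨hbS, ?_⟩
    by_contra hne
    refine hred (Reduced.append_iff.2 ⟨hu, (hS b hbS).2, ?_⟩)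
    rintro a ha c hc rfl
    obtain rfl : x = a := by simpa [hlast] using ha
    exact hne hc

end Counting

theorem run_append {A Q : Type} (δ : Q → A → Option Q) (v : Q) (l₁ l₂ : List A) :
    run δ v (l₁ ++ l₂) = (run δ v l₁).bind fun u => run δ u l₂ := by
  induction l₁ generalizing v with
  | nil => rfl
  | cons a l ih => simp only [List.cons_append, run, ih, Option.bind_assoc]

theorem run_append_singleton {A Q : Type} (δ : Q → A → Option Q) (v : Q) (l : List A) (a : A) :
    run δ v (l ++ [a]) = (run δ v l).bind (δ · a) := by
  simp [run_append, run]

section Automaton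

variable {n : ℕ} {Q : Type} (δ : Q → List (Letter n) → Option Q) (v0 : Q) (B : ℕ)

noncomputable def admissibleBlocks (q : List (List (Letter n))) : Finset (List (Letter n)) :=
  (List.finite_length_eq (Letter n) B).toFinset.filter fun b =>
    (run δ v0 (q ++ [b])).isSome ∧ Reduced (q ++ [b]).flatten

noncomputable def acceptedSeqs : ℕ → Finset (List (List (Letter n)))
  | 0 => {[]}
  | k + 1 => (acceptedSeqs k).biUnion fun q => (admissibleBlocks δ v0 B q).image (q ++ [·])

variable {δ v0 B}

theorem acceptedSeqs_spec {k : ℕ} {q : List (List (Letter n))} (hq : q ∈ acceptedSeqs δ v0 B k) :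
    q.flatten.length = B * k ∧ (run δ v0 q).isSome ∧ Reduced q.flatten := by
  induction k generalizing q with
  | zero =>
    obtain rfl : q = [] := by simpa [acceptedSeqs] using hq
    exact ⟨rfl, rfl, List.isChain_nil⟩
  | succ k ih =>
    simp only [acceptedSeqs, mem_biUnion, mem_image] at hq
    obtain ⟨p, hp, b, hb, rfl⟩ := hq
    obtain ⟨hblen, hrun, hred⟩ := by
      simpa only [admissibleBlocks, mem_filter, Set.Finite.mem_toFinset, Set.mem_ofPred_eq] using hb
    refine ⟨?_, hrun, hred⟩
    simp [hblen, (ih hp).1, mul_add]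

theorem flatten_injOn_acceptedSeqs (k : ℕ) :
    Set.InjOn List.flatten (acceptedSeqs δ v0 B k : Set (List (List (Letter n)))) := by
  induction k with
  | zero => simp [acceptedSeqs]
  | succ k ih =>
    intro q hq q' hq' h
    simp only [acceptedSeqs, coe_biUnion, coe_image, Set.mem_iUnion, Set.mem_image,
      mem_coe] at hq hq'
    obtain ⟨p, hp, b, -, rfl⟩ := hq
    obtain ⟨p', hp', b', -, rfl⟩ := hq'
    simp only [List.flatten_append, List.flatten_singleton] at h
    obtain ⟨hflat, rfl⟩ := List.append_inj h
      (by rw [(acceptedSeqs_spec hp).1, (acceptedSeqs_spec hp').1])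
    rw [ih hp hp' hflat]

theorem card_acceptedSeqs_succ (k : ℕ) :
    #(acceptedSeqs δ v0 B (k + 1)) = ∑ q ∈ acceptedSeqs δ v0 B k, #(admissibleBlocks δ v0 B q) := by
  rw [acceptedSeqs, card_biUnion]
  · exact sum_congr rfl fun q _ =>
      card_image_of_injective _ fun b b' h => by simpa using h
  · intro q _ q' _ hne
    simp only [Function.onFun, disjoint_left, mem_image]
    rintro _ ⟨b, -, rfl⟩ ⟨b', -, h⟩
    exact hne (List.append_inj' h rfl).1.symm

theorem natCard_le_card_admissibleBlocks_add (hdom : ∀ q a, (δ q a).isSome → a ∈ RW n B)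
    {q : List (List (Letter n))} {v : Q} (hrun : run δ v0 q = some v)
    (hred : Reduced q.flatten) :
    Nat.card {b // (δ v b).isSome} ≤ #(admissibleBlocks δ v0 B q) + (2 * n - 1) ^ (B - 1) := by
  set D := (List.finite_length_eq (Letter n) B).toFinset.filter fun b => (δ v b).isSome
  have hDRW : ∀ b ∈ D, b ∈ RW n B := fun b hb => hdom v b (mem_filter.1 hb).2
  have hD : Nat.card {b // (δ v b).isSome} = #D := by
    rw [← Nat.card_eq_finsetCard]
    exact Nat.card_congr (Equiv.subtypeEquivRight fun b => by
      simpa [D] using fun h => (hdom v b h).1)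
  have hgood : D.filter (fun b => Reduced (q.flatten ++ b)) ⊆ admissibleBlocks δ v0 B q := by
    intro b hb
    obtain ⟨hbD, hbred⟩ := mem_filter.1 hb
    obtain ⟨hlen, hsome⟩ := mem_filter.1 hbD
    refine mem_filter.2 ⟨hlen, ?_, by simpa using hbred⟩
    simpa [run_append_singleton, hrun] using hsome
  calc Nat.card {b // (δ v b).isSome} = #D := hD
    _ = #(D.filter fun b => Reduced (q.flatten ++ b)) +
        #(D.filter fun b => ¬Reduced (q.flatten ++ b)) := (card_filter_add_card_filter_not _).symm
    _ ≤ #(admissibleBlocks δ v0 B q) + (2 * n - 1) ^ (B - 1) :=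
      add_le_add (card_le_card hgood) (card_filter_not_reduced_append_le hred D hDRW)

theorem pow_le_card_acceptedSeqs {g : ℝ} (hg : 0 ≤ g)
    (hstep : ∀ k, ∀ q ∈ acceptedSeqs δ v0 B k, g ≤ #(admissibleBlocks δ v0 B q)) (k : ℕ) :
    g ^ k ≤ #(acceptedSeqs δ v0 B k) := by
  induction k with
  | zero => simp [acceptedSeqs]
  | succ k ih =>
    rw [card_acceptedSeqs_succ, Nat.cast_sum, pow_succ]
    calc g ^ k * g ≤ #(acceptedSeqs δ v0 B k) * g := by gcongr
      _ = #(acceptedSeqs δ v0 B k) • g := (nsmul_eq_mul _ _).symm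
      _ ≤ ∑ q ∈ acceptedSeqs δ v0 B k, (#(admissibleBlocks δ v0 B q) : ℝ) :=
        card_nsmul_le_sum _ _ _ (hstep k)

variable (δ v0 B)

noncomputable def prefixWords (d : Letter n) (k P : ℕ) : Finset (List (Letter n)) :=
  (acceptedSeqs δ v0 B k).biUnion fun q =>
    (extensions (q.flatten.getLastD d) P).image (q.flatten ++ ·)

theorem card_prefixWords (d : Letter n) (k P : ℕ) :
    #(prefixWords δ v0 B d k P) = #(acceptedSeqs δ v0 B k) * (2 * n - 1) ^ P := by
  rw [prefixWords, card_biUnion, ← smul_eq_mul, ← sum_const]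
  · exact sum_congr rfl fun q _ => by
      rw [card_image_of_injective _ fun _ _ => List.append_cancel_left, card_extensions]
  · intro q hq q' hq' hne
    simp only [Function.onFun, disjoint_left, mem_image]
    rintro _ ⟨t, -, rfl⟩ ⟨t', -, h⟩
    refine hne (flatten_injOn_acceptedSeqs k hq' hq (List.append_inj h ?_).1).symm
    rw [(acceptedSeqs_spec hq).1, (acceptedSeqs_spec hq').1]

theorem card_prefixWords_le_natCard (d : Letter n) (k P : ℕ) :
    #(prefixWords δ v0 B d k P) ≤ Nat.card {w : List (Letter n) //
      w.length = B * k + P ∧ Reduced w ∧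
      ∃ q : List (List (Letter n)), (run δ v0 q).isSome ∧ Reduced q.flatten ∧
        w.take (B * k) = q.flatten} := by
  rw [← Set.ncard_coe_finset, ← Nat.card_coe_set_eq]
  refine Set.ncard_le_ncard (fun w hw => ?_) ((List.finite_length_eq _ (B * k + P)).subset
    fun w hw => hw.1)
  simp only [prefixWords, coe_biUnion, coe_image, Set.mem_iUnion, Set.mem_image, mem_coe] at hw
  obtain ⟨q, hq, t, ht, rfl⟩ := hw
  obtain ⟨hlen, hrun, hred⟩ := acceptedSeqs_spec hq
  obtain ⟨htlen, htred⟩ := mem_extensions.1 ht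
  exact ⟨by simp [hlen, htlen], hred.append_of_cons_getLastD d htred, q, hrun, hred,
    List.take_left' hlen⟩

end Automaton

theorem natCast_two_mul_sub_one {n : ℕ} (hn : 1 ≤ n) :
    ((2 * n - 1 : ℕ) : ℝ) = 2 * (n : ℝ) - 1 := by
  rw [Nat.cast_sub (by omega)]
  push_cast
  ring

theorem sub_one_div_mul_pow_le {n B : ℕ} (hn : 1 ≤ n) (hB : 1 ≤ B) {lam : ℝ}
    (hlam : 1 / (2 * (n : ℝ)) ≤ lam) :
    (lam - 1 / (2 * (n : ℝ))) * ((2 * n - 1 : ℕ) : ℝ) ^ B ≤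
      lam * ((2 * n * (2 * n - 1) ^ (B - 1) : ℕ) : ℝ) - ((2 * n - 1) ^ (B - 1) : ℕ) := by
  obtain ⟨B, rfl⟩ := Nat.exists_eq_add_of_le' hB
  have hn' : (1 : ℝ) ≤ n := by exact_mod_cast hn
  push_cast
  rw [natCast_two_mul_sub_one hn, pow_succ]
  have hy : 0 ≤ (2 * (n : ℝ) - 1) ^ B := pow_nonneg (by linarith) _
  have hgap : lam * (2 * n * (2 * (n : ℝ) - 1) ^ B) - (2 * (n : ℝ) - 1) ^ B -
      (lam - 1 / (2 * n)) * ((2 * (n : ℝ) - 1) ^ B * (2 * n - 1)) =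
      (2 * (n : ℝ) - 1) ^ B * (lam - 1 / (2 * n)) := by
    field_simp
    ring
  linarith [mul_nonneg hy (sub_nonneg.2 hlam)]

theorem prefix_set_growth_general (n B P : ℕ) (hn : 1 ≤ n) (hB : 1 ≤ B)
    (Q : Type) (v0 : Q)
    (δ : Q → List (Letter n) → Option Q)
    (hdom : ∀ q a, (δ q a).isSome → a ∈ RW n B)
    (lam : ℝ) (hlam1 : 1 / (2 * (n : ℝ)) < lam)
    (hgrow : ∀ q : Q,
      lam * ((2 * n * (2 * n - 1) ^ (B - 1) : ℕ) : ℝ) ≤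
        (Nat.card {a : List (Letter n) // (δ q a).isSome} : ℝ)) :
    ∃ c : ℝ, 0 < c ∧ ∀ᶠ Lhat : ℕ in atTop,
      c * ((lam - 1 / (2 * (n : ℝ))) ^ ((1 : ℝ) / (B : ℝ)) * (2 * (n : ℝ) - 1)) ^
          (B * Lhat + P) ≤
        (Nat.card {w : List (Letter n) //
          w.length = B * Lhat + P ∧ Reduced w ∧
          ∃ q : List (List (Letter n)), (run δ v0 q).isSome ∧ Reduced q.flatten ∧
            w.take (B * Lhat) = q.flatten} : ℝ) := by
  set x := lam - 1 / (2 * (n : ℝ))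
  set y : ℝ := ((2 * n - 1 : ℕ) : ℝ) with hy
  have hx : 0 < x := sub_pos.2 hlam1
  have hstep : ∀ k, ∀ q ∈ acceptedSeqs δ v0 B k, x * y ^ B ≤ #(admissibleBlocks δ v0 B q) := by
    intro k q hq
    obtain ⟨-, hrun, hred⟩ := acceptedSeqs_spec hq
    obtain ⟨v, hv⟩ := Option.isSome_iff_exists.1 hrun
    have hcount : (Nat.card {b // (δ v b).isSome} : ℝ) ≤
        #(admissibleBlocks δ v0 B q) + ((2 * n - 1) ^ (B - 1) : ℕ) := by
      exact_mod_cast natCard_le_card_admissibleBlocks_add hdom hv hred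
    linarith [sub_one_div_mul_pow_le hn hB hlam1.le, hgrow v]
  set r := x ^ ((1 : ℝ) / B)
  have hr : r ^ B = x := by
    simpa only [r, one_div] using Real.rpow_inv_natCast_pow hx.le (by omega : B ≠ 0)
  have hr0 : 0 < r := Real.rpow_pos_of_pos hx _
  refine ⟨(r ^ P)⁻¹, by positivity, Eventually.of_forall fun k => ?_⟩
  calc (r ^ P)⁻¹ * (r * (2 * n - 1)) ^ (B * k + P) = (x * y ^ B) ^ k * y ^ P := by
        rw [hy, natCast_two_mul_sub_one hn, mul_pow, pow_add, pow_add, pow_mul, pow_mul, hr]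
        field_simp
        ring_nf
    _ ≤ #(acceptedSeqs δ v0 B k) * y ^ P := by
        gcongr
        exact pow_le_card_acceptedSeqs (by positivity) hstep k
    _ = #(prefixWords δ v0 B (⟨0, hn⟩, true) k P) := by
        rw [card_prefixWords, Nat.cast_mul, Nat.cast_pow]
    _ ≤ _ := by exact_mod_cast card_prefixWords_le_natCard δ v0 B _ k P

/-- Let `Σ̂` be an automaton over the alphabet `Â = R_B` (with the immersion condition)
with `λ·2n̂`-growth, `1/(2n) < λ ≤ 1`, and let `1 ≤ P < B`. For `L = B·L̂ + P`, the
prefix set `𝒫_P` of reduced words over `S` of length `L` whose initial subword of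
length `L - P` is the concatenation of an accepted word of `Σ̂` that is reduced over `S`
satisfies `|𝒫_P| ≥ c·m^L` with `m = (λ - 1/(2n))^(1/B)·(2n-1)`, for some `c > 0` and
all but finitely many such `L`. -/
theorem prefix_set_growth (n B P : ℕ) (hn : 1 ≤ n) (hB : 1 ≤ B)
    (hP1 : 1 ≤ P) (hPB : P < B)
    (Q : Type) [Finite Q] (v0 : Q)
    (δ : Q → List (Letter n) → Option Q)
    (hdom : ∀ q a, (δ q a).isSome → a ∈ RW n B)
    (himm : ∀ u a v, δ u a = some v → δ v (wInv a) = none)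
    (lam : ℝ) (hlam1 : 1 / (2 * (n : ℝ)) < lam) (hlam2 : lam ≤ 1)
    (hgrow : ∀ q : Q,
      lam * ((2 * n * (2 * n - 1) ^ (B - 1) : ℕ) : ℝ) ≤
        (Nat.card {a : List (Letter n) // (δ q a).isSome} : ℝ)) :
    ∃ c : ℝ, 0 < c ∧ ∀ᶠ Lhat : ℕ in atTop,
      c * ((lam - 1 / (2 * (n : ℝ))) ^ ((1 : ℝ) / (B : ℝ)) * (2 * (n : ℝ) - 1)) ^
          (B * Lhat + P) ≤
        (Nat.card {w : List (Letter n) //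
          w.length = B * Lhat + P ∧ Reduced w ∧
          ∃ q : List (List (Letter n)), (run δ v0 q).isSome ∧ Reduced q.flatten ∧
            w.take (B * Lhat) = q.flatten} : ℝ) :=
  prefix_set_growth_general n B P hn hB Q v0 δ hdom lam hlam1 hgrow
end
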